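/- Let f : X → Y be a surjective interior (continuous and open) map between topological spaces with selected points A_X ⊆ X, A_Y ⊆ Y, such that A_Y = {y | ∃x ∈ A_X, f⁻¹({y}) = {x}}. Let V_Y be a valuation on Y and define V_X(p) = f⁻¹(V_Y(p)). Then for every bimodal formula φ and every x ∈ X: (X, A_X, V_X), x ⊨ φ iff (Y, A_Y, V_Y), f(x) ⊨ φ. -/
import Mathlib


inductive Formula : Type where
  | var : Nat → Formula
  | bot : Formula
  | imp : Formula → Formula → Formula
  | box : Formula → Formula
  | dbox : Formula → Formula

def Formula.neg (φ : Formula) : Formula := .imp φ .bot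
def Formula.and (φ ψ : Formula) : Formula := .neg (.imp φ (.neg ψ))
def Formula.or (φ ψ : Formula) : Formula := .imp (.neg φ) ψ
def Formula.ddiam (φ : Formula) : Formula := .neg (.dbox (.neg φ))

/-- AT0 := (p ∧ [≠]¬p ∧ ⟨≠⟩(q ∧ [≠]¬q)) → (□¬q ∨ ⟨≠⟩(q ∧ □¬p)), with p = var 0, q = var 1. -/
def AT0 : Formula :=
  .imp (.and (.and (.var 0) (.dbox (.neg (.var 0))))
             (.ddiam (.and (.var 1) (.dbox (.neg (.var 1))))))
       (.or (.box (.neg (.var 1))) (.ddiam (.and (.var 1) (.box (.neg (.var 0))))))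

/-- Topological semantics with a set `A` of selected points. -/
def tsat {X : Type*} [TopologicalSpace X] (A : Set X) (V : Nat → Set X) :
    X → Formula → Prop
  | x, .var p => x ∈ V p
  | _, .bot => False
  | x, .imp φ ψ => tsat A V x φ → tsat A V x ψ
  | x, .box φ => ∃ U : Set X, IsOpen U ∧ x ∈ U ∧ ∀ y ∈ U, tsat A V y φ
  | x, .dbox φ => ∀ y, (x ∈ A → y ≠ x) → tsat A V y φ

/-- p-morphisms of topological spaces with selected points preserve truth of
bimodal formulas. -/
theorem stmt9 {X Y : Type*} [TopologicalSpace X] [TopologicalSpace Y]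
    (f : X → Y) (hsurj : Function.Surjective f) (hcont : Continuous f)
    (hopen : IsOpenMap f) (AX : Set X) (AY : Set Y)
    (hA : AY = {y | ∃ x ∈ AX, f ⁻¹' {y} = {x}})
    (VY : Nat → Set Y) (VX : Nat → Set X) (hV : ∀ p, VX p = f ⁻¹' (VY p)) :
    ∀ (φ : Formula) (x : X), tsat AX VX x φ ↔ tsat AY VY (f x) φ := by
  intro φ
  induction φ with
  | var p => intro x; simp [tsat, hV]
  | bot => intro x; simp [tsat]
  | imp φ ψ ihφ ihψ =>
      intro x
      simp only [tsat]
      rw [ihφ x, ihψ x]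
  | box φ ih =>
      intro x
      constructor
      · rintro ⟨U, hU, hxU, h⟩
        exact ⟨f '' U, hopen U hU, ⟨x, hxU, rfl⟩, by
          rintro y ⟨x', hx', rfl⟩; exact (ih x').mp (h x' hx')⟩
      · rintro ⟨U, hU, hxU, h⟩
        exact ⟨f ⁻¹' U, hU.preimage hcont, hxU, fun y hy => (ih y).mpr (h (f y) hy)⟩
  | dbox φ ih =>
      intro x
      constructor
      · intro h y hy
        by_cases hx : x ∈ AX
        · by_cases hyfx : y = f x
          · subst hyfx
            have hfx : f x ∉ AY := fun hmem => (hy hmem) rfl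
            rw [hA] at hfx
            have : ¬ (f ⁻¹' {f x} = {x}) := fun he => hfx ⟨x, hx, he⟩
            have : ∃ x', f x' = f x ∧ x' ≠ x := by
              by_contra hc
              push_neg at hc
              apply this
              ext z
              simp only [Set.mem_preimage, Set.mem_singleton_iff]
              exact ⟨fun hz => hc z hz, fun hz => hz ▸ rfl⟩
            obtain ⟨x', hfx', hne⟩ := this
            rw [← hfx']
            exact (ih x').mp (h x' (fun _ => hne))
          · obtain ⟨x', rfl⟩ := hsurj y
            exact (ih x').mp (h x' (fun _ he => hyfx (by rw [he])))
        · obtain ⟨x', rfl⟩ := hsurj y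
          exact (ih x').mp (h x' (fun hx' => absurd hx' hx))
      · intro h x' hx'
        apply (ih x').mpr
        apply h
        intro hfx
        rw [hA] at hfx
        obtain ⟨x0, hx0, hfib⟩ := hfx
        have hxx0 : x = x0 := by
          have : x ∈ f ⁻¹' {f x} := rfl
          rw [hfib] at this; exact this
        intro he
        have : x' ∈ f ⁻¹' {f x} := he
        rw [hfib] at this
        exact hx' (hxx0 ▸ hx0) (this.trans hxx0.symm)
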